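/- Let u and v be two minimizers over the segregated admissible set K of the functional J(u) = ½ Σ_i ‖∇u_i‖² − Σ_{i<j}(∇u_i,∇u_j) on a finite connected graph, and set û_l = u_l − Σ_{j≠l} u_j, v̂_l = v_l − Σ_{j≠l} v_j. Then for each l, max over all x ∈ X of (û_l(x) − v̂_l(x)) equals the maximum of the same quantity restricted to the set { x : u_l(x) ≤ v_l(x) }. -/
import Mathlib


open Finset

noncomputable def lap {X : Type*} [Fintype X] (w : X → X → ℝ) (u : X → ℝ) (x : X) : ℝ :=
  ∑ y, w x y * (u x - u y)

noncomputable def din {X : Type*} [Fintype X] (w : X → X → ℝ) (u v : X → ℝ) : ℝ :=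
  (1 / 2) * ∑ x, ∑ y, w x y * (u y - u x) * (v y - v x)

noncomputable def Jseg {X : Type*} [Fintype X] (w : X → X → ℝ) {k : ℕ}
    (u : Fin k → X → ℝ) : ℝ :=
  (1 / 2) * ∑ i, din w (u i) (u i) -
    ∑ i, ∑ j ∈ Finset.univ.filter (fun j => i < j), din w (u i) (u j)

def Adm {X : Type*} {k : ℕ} (Γ : Set X) (φ : Fin k → X → ℝ) (u : Fin k → X → ℝ) : Prop :=
  (∀ i, ∀ x ∈ Γ, u i x = φ i x) ∧ (∀ i x, 0 ≤ u i x) ∧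
    (∀ i j, i ≠ j → ∀ x, u i x * u j x = 0)

noncomputable def hat {X : Type*} [Fintype X] {k : ℕ} (u : Fin k → X → ℝ)
    (i : Fin k) (x : X) : ℝ :=
  u i x - ∑ j ∈ Finset.univ.erase i, u j x

section Aux

variable {X : Type*} [Fintype X] {k : ℕ}

lemma din_comm (w : X → X → ℝ) (a b : X → ℝ) : din w a b = din w b a := by
  unfold din
  congr 1
  exact Finset.sum_congr rfl fun x _ => Finset.sum_congr rfl fun y _ => by ring

lemma din_add_left (w : X → X → ℝ) (a b c : X → ℝ) :
    din w (fun y => a y + b y) c = din w a c + din w b c := by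
  simp only [din, ← Finset.sum_add_distrib, ← mul_add]
  congr 1
  exact Finset.sum_congr rfl fun x _ => Finset.sum_congr rfl fun y _ => by ring

lemma din_sum_left (w : X → X → ℝ) {ι : Type*} (s : Finset ι) (a : ι → X → ℝ) (c : X → ℝ) :
    din w (fun y => ∑ i ∈ s, a i y) c = ∑ i ∈ s, din w (a i) c := by
  classical
  induction s using Finset.induction_on with
  | empty => simp [din]
  | @insert j s hj ih =>
    simp only [Finset.sum_insert hj]
    have h : din w (fun y => a j y + ∑ i ∈ s, a i y) c
        = din w (a j) c + din w (fun y => ∑ i ∈ s, a i y) c :=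
      din_add_left w (a j) (fun y => ∑ i ∈ s, a i y) c
    rw [h, ih]

lemma din_self_nonneg (w : X → X → ℝ) (hnn : ∀ x y, 0 ≤ w x y) (a : X → ℝ) :
    0 ≤ din w a a := by
  unfold din
  apply mul_nonneg (by norm_num)
  refine Finset.sum_nonneg fun x _ => Finset.sum_nonneg fun y _ => ?_
  rw [mul_assoc]
  exact mul_nonneg (hnn x y) (mul_self_nonneg _)

lemma din_expand (w : X → X → ℝ) (a d : X → ℝ) (t : ℝ) :
    din w (fun y => a y + t * d y) (fun y => a y + t * d y)
      = din w a a + 2 * t * din w d a + t ^ 2 * din w d d := by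
  simp only [din, Finset.mul_sum, ← Finset.sum_add_distrib]
  exact Finset.sum_congr rfl fun x _ => Finset.sum_congr rfl fun y _ => by ring

lemma din_dlt [DecidableEq X] (w : X → X → ℝ) (hsym : ∀ x y, w x y = w y x)
    (c : X → ℝ) (x0 : X) :
    din w (fun y => if y = x0 then (1:ℝ) else 0) c = lap w c x0 := by
  unfold din lap
  have h : ∀ x y : X,
      w x y * ((if y = x0 then (1:ℝ) else 0) - if x = x0 then (1:ℝ) else 0) * (c y - c x)
        = (if y = x0 then w x y * (c x0 - c x) else 0)
          - (if x = x0 then w x y * (c y - c x0) else 0) := by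
    intro x y
    split_ifs <;> subst_vars <;> ring
  simp only [h, Finset.sum_sub_distrib]
  rw [Finset.sum_comm (f := fun x y => if x = x0 then w x y * (c y - c x0) else 0)]
  simp only [Finset.sum_ite_eq', Finset.mem_univ, if_true]
  have h2 : ∑ x, w x x0 * (c x0 - c x) = ∑ x, w x0 x * (c x0 - c x) :=
    Finset.sum_congr rfl fun x _ => by rw [hsym]
  rw [h2, ← Finset.sum_sub_distrib, Finset.mul_sum]
  exact Finset.sum_congr rfl fun x _ => by ring

lemma sum_split (F : Fin k → Fin k → ℝ) (hF : ∀ i j, F i j = F j i) :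
    ∑ i, ∑ j, F i j
      = ∑ i, F i i + 2 * ∑ i, ∑ j ∈ Finset.univ.filter (fun j => i < j), F i j := by
  have h1 : ∀ i : Fin k, ∑ j, F i j
      = ∑ j ∈ Finset.univ.filter (fun j => i < j), F i j
        + (∑ j ∈ Finset.univ.filter (fun j => j < i), F i j + F i i) := by
    intro i
    rw [← Finset.sum_filter_add_sum_filter_not Finset.univ (fun j => i < j) (F i)]
    congr 1
    have he : Finset.univ.filter (fun j => ¬ i < j)
        = insert i (Finset.univ.filter (fun j => j < i)) := by
      ext j
      simp only [Finset.mem_filter, Finset.mem_univ, true_and, not_lt, Finset.mem_insert]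
      rw [le_iff_lt_or_eq]
      tauto
    rw [he, Finset.sum_insert (by simp)]
    ring
  simp only [h1, Finset.sum_add_distrib]
  have h2 : ∑ i, ∑ j ∈ Finset.univ.filter (fun j => j < i), F i j
      = ∑ i, ∑ j ∈ Finset.univ.filter (fun j => i < j), F i j := by
    rw [Finset.sum_comm' (t' := Finset.univ)
      (s' := fun j => Finset.univ.filter (fun i => j < i)) (by simp)]
    exact Finset.sum_congr rfl fun j _ => Finset.sum_congr rfl fun i _ => hF i j
  rw [h2]; ring

lemma Jseg_eq (w : X → X → ℝ) (u : Fin k → X → ℝ) :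
    Jseg w u = ∑ i, din w (u i) (u i)
      - (1/2) * din w (fun y => ∑ i, u i y) (fun y => ∑ i, u i y) := by
  have hs : din w (fun y => ∑ i, u i y) (fun y => ∑ i, u i y)
      = ∑ i, ∑ j, din w (u i) (u j) := by
    rw [din_sum_left w Finset.univ u (fun y => ∑ i, u i y)]
    refine Finset.sum_congr rfl fun i _ => ?_
    rw [din_comm]
    rw [din_sum_left w Finset.univ u (u i)]
    exact Finset.sum_congr rfl fun j _ => din_comm w (u j) (u i)
  rw [Jseg, hs, sum_split (fun i j => din w (u i) (u j)) (fun i j => din_comm w (u i) (u j))]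
  ring

end Aux

section Var

variable {X : Type*} [Fintype X] {k : ℕ}

lemma hat_eq (u : Fin k → X → ℝ) (l : Fin k) (y : X) :
    hat u l y = 2 * u l y - ∑ j, u j y := by
  rw [hat, ← Finset.add_sum_erase Finset.univ (fun j => u j y) (Finset.mem_univ l)]
  ring

lemma lap_hat (w : X → X → ℝ) (u : Fin k → X → ℝ) (l : Fin k) (x0 : X) :
    lap w (hat u l) x0
      = 2 * lap w (u l) x0 - lap w (fun y => ∑ j, u j y) x0 := by
  unfold lap
  rw [Finset.mul_sum, ← Finset.sum_sub_distrib]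
  exact Finset.sum_congr rfl fun y _ => by rw [hat_eq, hat_eq]; ring

lemma variation [DecidableEq X] {Γ : Set X} {φ u : Fin k → X → ℝ} (w : X → X → ℝ)
    (hsym : ∀ x y, w x y = w y x)
    (hu : Adm Γ φ u) (hmin : ∀ z, Adm Γ φ z → Jseg w u ≤ Jseg w z)
    (l : Fin k) (x0 : X) (hx0 : x0 ∉ Γ) (hseg0 : ∀ j, j ≠ l → u j x0 = 0)
    (t : ℝ) (ht : 0 ≤ u l x0 + t) :
    0 ≤ t * lap w (hat u l) x0
      + t ^ 2 / 2 * din w (fun y => if y = x0 then (1:ℝ) else 0)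
          (fun y => if y = x0 then (1:ℝ) else 0) := by
  obtain ⟨hub, hun, hus⟩ := hu
  set dl : X → ℝ := fun y => if y = x0 then (1:ℝ) else 0 with hdl
  set g : X → ℝ := fun y => u l y + t * dl y with hg
  set z : Fin k → X → ℝ := Function.update u l g with hz
  have hzl : z l = g := Function.update_self l g u
  have hzne : ∀ i, i ≠ l → z i = u i := fun i hi => Function.update_of_ne hi g u
  have hdl0 : ∀ y, y ≠ x0 → dl y = 0 := fun y hy => by simp [hdl, hy]
  have hdl1 : dl x0 = 1 := by simp [hdl]
  have hadm : Adm Γ φ z := by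
    refine ⟨?_, ?_, ?_⟩
    · intro i x hx
      by_cases hi : i = l
      · subst hi
        rw [hzl]
        have hne : x ≠ x0 := fun h => hx0 (h ▸ hx)
        simp only [hg, hdl0 x hne, mul_zero, add_zero]
        exact hub i x hx
      · rw [hzne i hi]; exact hub i x hx
    · intro i y
      by_cases hi : i = l
      · subst hi
        rw [hzl]
        by_cases hy : y = x0
        · subst hy; simp only [hg, hdl1, mul_one]; linarith
        · simp only [hg, hdl0 y hy, mul_zero, add_zero]; exact hun i y
      · rw [hzne i hi]; exact hun i y
    · intro i j hij y
      by_cases hi : i = l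
      · subst hi
        rw [hzl, hzne j (Ne.symm hij)]
        by_cases hy : y = x0
        · subst hy; rw [hseg0 j (Ne.symm hij), mul_zero]
        · simp only [hg, hdl0 y hy, mul_zero, add_zero]; exact hus i j hij y
      · rw [hzne i hi]
        by_cases hj : j = l
        · subst hj
          rw [hzl]
          by_cases hy : y = x0
          · subst hy; rw [hseg0 i hi, zero_mul]
          · simp only [hg, hdl0 y hy, mul_zero, add_zero]; exact hus i j hij y
        · rw [hzne j hj]; exact hus i j hij y
  have hJ := hmin z hadm
  -- compute Jseg w z
  have hsz : ∀ y, ∑ i, z i y = (∑ i, u i y) + t * dl y := by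
    intro y
    rw [← Finset.add_sum_erase Finset.univ (fun i => z i y) (Finset.mem_univ l),
      ← Finset.add_sum_erase Finset.univ (fun i => u i y) (Finset.mem_univ l)]
    have h1 : ∑ i ∈ Finset.univ.erase l, z i y = ∑ i ∈ Finset.univ.erase l, u i y :=
      Finset.sum_congr rfl fun i hi => by
        rw [hzne i (Finset.ne_of_mem_erase hi)]
    rw [h1, hzl]
    simp only [hg]
    ring
  have hds : ∑ i, din w (z i) (z i)
      = ∑ i, din w (u i) (u i) + (2 * t * din w dl (u l) + t ^ 2 * din w dl dl) := by
    rw [← Finset.add_sum_erase Finset.univ (fun i => din w (z i) (z i)) (Finset.mem_univ l),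
      ← Finset.add_sum_erase Finset.univ (fun i => din w (u i) (u i)) (Finset.mem_univ l)]
    have h1 : ∑ i ∈ Finset.univ.erase l, din w (z i) (z i)
        = ∑ i ∈ Finset.univ.erase l, din w (u i) (u i) :=
      Finset.sum_congr rfl fun i hi => by rw [hzne i (Finset.ne_of_mem_erase hi)]
    have h2 : din w (z l) (z l) = din w (u l) (u l) + 2 * t * din w dl (u l)
        + t ^ 2 * din w dl dl := by
      rw [hzl]
      exact din_expand w (u l) dl t
    rw [h1, h2]
    ring
  have hS : din w (fun y => ∑ i, z i y) (fun y => ∑ i, z i y)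
      = din w (fun y => ∑ i, u i y) (fun y => ∑ i, u i y)
        + 2 * t * din w dl (fun y => ∑ i, u i y) + t ^ 2 * din w dl dl := by
    have h0 : (fun y => ∑ i, z i y) = fun y => (∑ i, u i y) + t * dl y := funext hsz
    rw [h0]
    exact din_expand w (fun y => ∑ i, u i y) dl t
  rw [Jseg_eq w z, Jseg_eq w u, hds, hS] at hJ
  have hB : din w dl (u l) = lap w (u l) x0 := din_dlt w hsym (u l) x0
  have hC : din w dl (fun y => ∑ i, u i y) = lap w (fun y => ∑ i, u i y) x0 :=
    din_dlt w hsym (fun y => ∑ i, u i y) x0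
  have hlap := lap_hat w u l x0
  rw [hB, hC] at hJ
  have hgoal : t * lap w (hat u l) x0 + t ^ 2 / 2 * din w dl dl
      = 2 * t * lap w (u l) x0 - t * lap w (fun y => ∑ i, u i y) x0
        + t ^ 2 / 2 * din w dl dl := by
    rw [hlap]; ring
  rw [hgoal]
  linarith

end Var

section Sign

lemma sign_helper {L c b : ℝ} (hc : 0 ≤ c) (hb : 0 < b)
    (h : ∀ t : ℝ, 0 < t → t ≤ b → 0 ≤ t * L + t ^ 2 / 2 * c) : 0 ≤ L := by
  by_contra hL
  push_neg at hL
  set m : ℝ := -L with hm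
  have hm0 : 0 < m := by simp [hm]; linarith
  set t : ℝ := min b (m / (c + 1)) with htd
  have ht0 : 0 < t := lt_min hb (div_pos hm0 (by linarith))
  have ht1 : t ≤ b := min_le_left _ _
  have ht2 : t ≤ m / (c + 1) := min_le_right _ _
  have ht3 : t * (c + 1) ≤ m := (le_div_iff₀ (by linarith)).mp ht2
  have h4 := h t ht0 ht1
  have hL' : L = -m := by simp [hm]
  rw [hL'] at h4
  nlinarith [mul_pos ht0 ht0, mul_pos ht0 hm0, mul_le_mul_of_nonneg_left ht3 ht0.le]
end Sign

section Harm

variable {X : Type*} [Fintype X] {k : ℕ}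

lemma lap_hat_zero [DecidableEq X] {Γ : Set X} {φ u : Fin k → X → ℝ} (w : X → X → ℝ)
    (hsym : ∀ x y, w x y = w y x) (hnn : ∀ x y, 0 ≤ w x y)
    (hu : Adm Γ φ u) (hmin : ∀ z, Adm Γ φ z → Jseg w u ≤ Jseg w z)
    (l : Fin k) (x0 : X) (hx0 : x0 ∉ Γ) (hpos : 0 < u l x0) :
    lap w (hat u l) x0 = 0 := by
  have hseg0 : ∀ j, j ≠ l → u j x0 = 0 := by
    intro j hj
    rcases mul_eq_zero.mp (hu.2.2 j l hj x0) with h | h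
    · exact h
    · exact absurd h (ne_of_gt hpos)
  have hD : 0 ≤ din w (fun y => if y = x0 then (1:ℝ) else 0)
      (fun y => if y = x0 then (1:ℝ) else 0) := din_self_nonneg w hnn _
  have h1 : 0 ≤ lap w (hat u l) x0 := by
    refine sign_helper hD one_pos fun t ht _ => ?_
    exact variation w hsym hu hmin l x0 hx0 hseg0 t (by linarith [hu.2.1 l x0])
  have h2 : 0 ≤ -lap w (hat u l) x0 := by
    refine sign_helper hD hpos fun t ht htb => ?_
    have hv := variation w hsym hu hmin l x0 hx0 hseg0 (-t) (by linarith)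
    have he : (-t) ^ 2 = t ^ 2 := by ring
    rw [he] at hv
    linarith
  linarith

lemma lap_hat_nonneg [DecidableEq X] {Γ : Set X} {φ u : Fin k → X → ℝ} (w : X → X → ℝ)
    (hsym : ∀ x y, w x y = w y x) (hnn : ∀ x y, 0 ≤ w x y)
    (hu : Adm Γ φ u) (hmin : ∀ z, Adm Γ φ z → Jseg w u ≤ Jseg w z)
    (l : Fin k) (x0 : X) (hx0 : x0 ∉ Γ) :
    0 ≤ lap w (hat u l) x0 := by
  by_cases hall : ∀ i, u i x0 = 0
  · have hD : 0 ≤ din w (fun y => if y = x0 then (1:ℝ) else 0)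
        (fun y => if y = x0 then (1:ℝ) else 0) := din_self_nonneg w hnn _
    refine sign_helper hD one_pos fun t ht _ => ?_
    exact variation w hsym hu hmin l x0 hx0 (fun j _ => hall j) t
      (by rw [hall l]; linarith)
  · push_neg at hall
    obtain ⟨m, hm⟩ := hall
    have hmpos : 0 < u m x0 := lt_of_le_of_ne (hu.2.1 m x0) (Ne.symm hm)
    by_cases hml : m = l
    · subst hml
      rw [lap_hat_zero w hsym hnn hu hmin m x0 hx0 hmpos]
    · have hsegm : ∀ j, j ≠ m → u j x0 = 0 := by
        intro j hj
        rcases mul_eq_zero.mp (hu.2.2 j m hj x0) with h | h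
        · exact h
        · exact absurd h (ne_of_gt hmpos)
      have hlm : lap w (hat u m) x0 = 0 :=
        lap_hat_zero w hsym hnn hu hmin m x0 hx0 hmpos
      -- pointwise: hat u l y + hat u m y ≤ 0
      have key : ∀ y, hat u l y + hat u m y ≤ 0 := by
        intro y
        unfold hat
        have h1 : u m y ≤ ∑ j ∈ Finset.univ.erase l, u j y :=
          Finset.single_le_sum (fun j _ => hu.2.1 j y)
            (Finset.mem_erase.mpr ⟨hml, Finset.mem_univ m⟩)
        have h2 : u l y ≤ ∑ j ∈ Finset.univ.erase m, u j y :=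
          Finset.single_le_sum (fun j _ => hu.2.1 j y)
            (Finset.mem_erase.mpr ⟨fun h => hml h.symm, Finset.mem_univ l⟩)
        linarith
      have keyx : hat u m x0 = -hat u l x0 := by
        unfold hat
        have h1 : ∑ j ∈ Finset.univ.erase l, u j x0 = u m x0 := by
          refine Finset.sum_eq_single_of_mem m
            (Finset.mem_erase.mpr ⟨hml, Finset.mem_univ m⟩) ?_
          intro j _ hj
          exact hsegm j hj
        have h2 : ∑ j ∈ Finset.univ.erase m, u j x0 = 0 :=
          Finset.sum_eq_zero fun j hj => hsegm j (Finset.ne_of_mem_erase hj)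
        have h3 : u l x0 = 0 := hsegm l fun h => hml h.symm
        rw [h1, h2, h3]
        ring
      have hsum : 0 ≤ lap w (hat u l) x0 + lap w (hat u m) x0 := by
        unfold lap
        rw [← Finset.sum_add_distrib]
        refine Finset.sum_nonneg fun y _ => ?_
        rw [keyx]
        have e : w x0 y * (hat u l x0 - hat u l y) + w x0 y * (-hat u l x0 - hat u m y)
            = w x0 y * (-(hat u l y + hat u m y)) := by ring
        rw [e]
        exact mul_nonneg (hnn x0 y) (by linarith [key y])
      linarith

end Harm

theorem stmt_16 {X : Type*} [Fintype X] (w : X → X → ℝ)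
    (hsym : ∀ x y, w x y = w y x) (hnn : ∀ x y, 0 ≤ w x y)
    (hconn : ∀ x y : X, Relation.ReflTransGen (fun a b => 0 < w a b) x y)
    (k : ℕ) (Γ : Set X) (hΓ : Γ.Nonempty) (φ : Fin k → X → ℝ)
    (hφ01 : ∀ i, ∀ x ∈ Γ, φ i x = 0 ∨ φ i x = 1)
    (hφseg : ∀ i j, i ≠ j → ∀ x ∈ Γ, φ i x * φ j x = 0)
    (u v : Fin k → X → ℝ) (hu : Adm Γ φ u) (hv : Adm Γ φ v)
    (hminu : ∀ z : Fin k → X → ℝ, Adm Γ φ z → Jseg w u ≤ Jseg w z)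
    (hminv : ∀ z : Fin k → X → ℝ, Adm Γ φ z → Jseg w v ≤ Jseg w z) :
    ∀ l : Fin k, ∃ x0 : X, u l x0 ≤ v l x0 ∧
      ∀ x : X, hat u l x - hat v l x ≤ hat u l x0 - hat v l x0 := by
  classical
  intro l
  by_contra hcon
  push_neg at hcon
  obtain ⟨γ, hγ⟩ := hΓ
  have hXne : (Finset.univ : Finset X).Nonempty := ⟨γ, Finset.mem_univ γ⟩
  obtain ⟨xm, -, hxm⟩ :=
    Finset.exists_max_image Finset.univ (fun x => hat u l x - hat v l x) hXne
  have hQ0 : ∀ x : X, hat u l x - hat v l x ≤ hat u l xm - hat v l xm :=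
    fun x => hxm x (Finset.mem_univ x)
  -- maximizers propagate along edges
  have step : ∀ y : X, (∀ x, hat u l x - hat v l x ≤ hat u l y - hat v l y) →
      ∀ z : X, 0 < w y z →
        ∀ x, hat u l x - hat v l x ≤ hat u l z - hat v l z := by
    intro y hy z hwz
    have hvu : v l y < u l y := by
      by_contra hle
      push_neg at hle
      obtain ⟨x, hx⟩ := hcon y hle
      exact absurd (hy x) (not_le.mpr hx)
    have hyΓ : y ∉ Γ := by
      intro hyΓ
      rw [hu.1 l y hyΓ, hv.1 l y hyΓ] at hvu
      exact lt_irrefl _ hvu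
    have hpos : 0 < u l y := lt_of_le_of_lt (hv.2.1 l y) hvu
    have h1 : lap w (hat u l) y = 0 :=
      lap_hat_zero w hsym hnn hu hminu l y hyΓ hpos
    have h2 : 0 ≤ lap w (hat v l) y :=
      lap_hat_nonneg w hsym hnn hv hminv l y hyΓ
    have hlapf : ∑ x, w y x * ((hat u l y - hat v l y) - (hat u l x - hat v l x))
        = lap w (hat u l) y - lap w (hat v l) y := by
      unfold lap
      rw [← Finset.sum_sub_distrib]
      exact Finset.sum_congr rfl fun x _ => by ring
    have hle0 : ∑ x, w y x * ((hat u l y - hat v l y) - (hat u l x - hat v l x)) ≤ 0 := by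
      rw [hlapf, h1]; linarith
    have hterm : ∀ x ∈ Finset.univ,
        0 ≤ w y x * ((hat u l y - hat v l y) - (hat u l x - hat v l x)) := by
      intro x _
      exact mul_nonneg (hnn y x) (by linarith [hy x])
    have hzero : ∀ x ∈ Finset.univ,
        w y x * ((hat u l y - hat v l y) - (hat u l x - hat v l x)) = 0 := by
      rw [← Finset.sum_eq_zero_iff_of_nonneg hterm]
      exact le_antisymm hle0 (Finset.sum_nonneg hterm)
    have hz := hzero z (Finset.mem_univ z)
    rcases mul_eq_zero.mp hz with h | h
    · exact absurd h (ne_of_gt hwz)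
    · intro x
      have : hat u l z - hat v l z = hat u l y - hat v l y := by linarith
      rw [this]; exact hy x
  have hprop : ∀ c : X, Relation.ReflTransGen (fun a b => 0 < w a b) xm c →
      ∀ x, hat u l x - hat v l x ≤ hat u l c - hat v l c := by
    intro c hc
    induction hc with
    | refl => exact hQ0
    | tail hab hbc ih => exact step _ ih _ hbc
  have hQγ := hprop γ (hconn xm γ)
  have hle : u l γ ≤ v l γ := by
    rw [hu.1 l γ hγ, hv.1 l γ hγ]
  obtain ⟨x, hx⟩ := hcon γ hle
  exact absurd (hQγ x) (not_le.mpr hx)
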